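/- With X, T, and the metric d as in the standing construction, the metric completion (T̄, d) of (T, d) is compact. -/

import Mathlib

/-- `A` is an arc in `X` joining `x` and `y`: the image of a continuous injection
from `[0,1]` sending `0` to `x` and `1` to `y`. -/
def IsArcBetween {X : Type*} [TopologicalSpace X] (A : Set X) (x y : X) : Prop :=
  ∃ f : unitInterval → X, Continuous f ∧ Function.Injective f ∧
    f 0 = x ∧ f 1 = y ∧ Set.range f = A

/-- `A` is an arc in `X` (a subspace homeomorphic to `[0,1]`). -/
def IsArc {X : Type*} [TopologicalSpace X] (A : Set X) : Prop :=
  ∃ x y, IsArcBetween A x y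

/-- `X` is uniquely arcwise connected: any two distinct points are joined by a unique arc. -/
def UniquelyArcwiseConnected (X : Type*) [TopologicalSpace X] : Prop :=
  ∀ x y : X, x ≠ y → ∃! A : Set X, IsArcBetween A x y

/-- A dendrite: a (metrizable) continuum which is locally connected and uniquely
arcwise connected. -/
def IsDendrite (X : Type*) [TopologicalSpace X] : Prop :=
  Nonempty X ∧ CompactSpace X ∧ ConnectedSpace X ∧
    TopologicalSpace.MetrizableSpace X ∧ LocallyConnectedSpace X ∧
    UniquelyArcwiseConnected X

/-- A subset `Y` of `X` is a tree: it is a dendrite (with the subspace topology)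
which is the union of finitely many arcs. -/
def IsTree {X : Type*} [TopologicalSpace X] (Y : Set X) : Prop :=
  IsDendrite Y ∧ ∃ (n : ℕ) (A : Fin n → Set X), (∀ i, IsArc (A i)) ∧ Y = ⋃ i, A i

/-- The arc `[x, y]` in a uniquely arcwise connected space (`{x}` if `x = y`). -/
noncomputable def arcOf {X : Type*} [TopologicalSpace X]
    (hX : UniquelyArcwiseConnected X) (x y : X) : Set X :=
  letI : Decidable (x = y) := Classical.dec _
  if h : x = y then {x} else (hX x y h).choose

/-- The standing construction: in a uniquely arcwise connected continuum `X`, a strictly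
increasing sequence of trees `T n = I 0 ∪ ... ∪ I n` built from arcs `I i` meeting
pairwise in at most a point, together with homeomorphisms `h i : I i → [0,1]`. -/
structure StandingConstruction (X : Type*) [MetricSpace X] where
  /-- `X` is uniquely arcwise connected. -/
  huac : UniquelyArcwiseConnected X
  /-- the arcs `I i` -/
  I : ℕ → Set X
  arc_I : ∀ i, IsArc (I i)
  /-- distinct arcs meet in at most one point -/
  inter_I : ∀ i j, i ≠ j → (I i ∩ I j).Subsingleton
  /-- each partial union `T n = ⋃_{i ≤ n} I i` is a tree -/
  tree_T : ∀ n : ℕ, IsTree (⋃ i ≤ n, I i)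
  /-- the sequence of trees is strictly increasing -/
  strict_T : ∀ n : ℕ, (⋃ i ≤ n, I i) ⊂ ⋃ i ≤ n + 1, I i
  /-- the homeomorphisms `h i : I i → [0,1]` -/
  h : ℕ → X → ℝ
  h_cont : ∀ i, ContinuousOn (h i) (I i)
  h_inj : ∀ i, Set.InjOn (h i) (I i)
  h_image : ∀ i, h i '' I i = Set.Icc (0 : ℝ) 1

/-- The tree `T n` of the standing construction. -/
def StandingConstruction.Tn {X : Type*} [MetricSpace X]
    (sc : StandingConstruction X) (n : ℕ) : Set X :=
  ⋃ i ≤ n, sc.I i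

/-- The set `T = ⋃ n T n` of the standing construction. -/
def StandingConstruction.T {X : Type*} [MetricSpace X]
    (sc : StandingConstruction X) : Set X :=
  ⋃ i, sc.I i

/-- The metric `d(x,y) = ∑ i 2^{-(i+1)} l(h i ([x,y] ∩ I i))` of the standing
construction, where `l` is the length (diameter) of a subinterval of `[0,1]`. -/
noncomputable def StandingConstruction.d {X : Type*} [MetricSpace X]
    (sc : StandingConstruction X) (x y : X) : ℝ :=
  ∑' i : ℕ, (2 : ℝ)⁻¹ ^ (i + 1) *
    Metric.diam (sc.h i '' (arcOf sc.huac x y ∩ sc.I i))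

/-!
Every point `x` of `T` is `d`-close to the tree `T_N`: follow an arc from `x` into `T_N` up to
its first point `r` in `T_N`. The arc `[x, r]` meets each `I_i`, `i ≤ N`, in at most `r`, so only
the terms with `i > N` contribute to `d(x, r) ≤ 2^{-(N+1)}`. On the other hand `d` restricted to
a single arc `I_i` is `2^{-(i+1)}` times the length of the `h_i`-image of a sub-arc, so each
`I_i`, parametrized by `[0,1]`, maps uniformly continuously, hence onto a compact set, into the
completion. Thus the dense image of `T` is totally bounded, and the complete space is compact.
-/

open Set Metric

section Arcs

variable {W : Type*} [TopologicalSpace W] (hW : UniquelyArcwiseConnected W)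

theorem IsArcBetween.symm {A : Set W} {x y : W} (h : IsArcBetween A x y) :
    IsArcBetween A y x := by
  obtain ⟨f, hc, hi, h0, h1, hr⟩ := h
  refine ⟨f ∘ unitInterval.symm, hc.comp unitInterval.continuous_symm,
    hi.comp unitInterval.symm_involutive.injective, by simpa using h1, by simpa using h0, ?_⟩
  rw [range_comp, unitInterval.symm_involutive.surjective.range_eq, image_univ, hr]

theorem isArcBetween_image_Icc {f : unitInterval → W} (hc : Continuous f)
    (hi : Function.Injective f) {a b : unitInterval} (hab : a < b) :
    IsArcBetween (f '' Icc a b) (f a) (f b) := by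
  have hsub : Icc (a : ℝ) b ⊆ unitInterval := Icc_subset_Icc a.2.1 b.2.2
  let e := inclusion hsub ∘ (iccHomeoI (a : ℝ) b hab).symm
  have he : range e = Icc a b := by
    rw [range_comp, (iccHomeoI (a : ℝ) b hab).symm.surjective.range_eq, image_univ,
      range_inclusion]
    rfl
  refine ⟨f ∘ e, hc.comp ((continuous_inclusion hsub).comp (Homeomorph.continuous _)),
    hi.comp ((inclusion_injective hsub).comp (Homeomorph.injective _)), ?_, ?_, ?_⟩
  · exact congrArg f (Subtype.ext (by simp [e]))
  · exact congrArg f (Subtype.ext (by simp [e]))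
  · rw [range_comp, he]

theorem arcOf_self (x : W) : arcOf hW x x = {x} :=
  dif_pos rfl

theorem arcOf_isArcBetween {x y : W} (h : x ≠ y) : IsArcBetween (arcOf hW x y) x y := by
  rw [arcOf, dif_neg h]
  exact (hW x y h).choose_spec.1

theorem arcOf_eq {A : Set W} {x y : W} (h : x ≠ y) (hA : IsArcBetween A x y) :
    arcOf hW x y = A := by
  rw [arcOf, dif_neg h]
  exact ((hW x y h).choose_spec.2 A hA).symm

theorem arcOf_image_uIcc {f : unitInterval → W} (hc : Continuous f)
    (hi : Function.Injective f) (a b : unitInterval) :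
    arcOf hW (f a) (f b) = f '' uIcc a b := by
  rcases lt_trichotomy a b with hab | rfl | hab
  · rw [uIcc_of_le hab.le]
    exact arcOf_eq hW (hi.ne hab.ne) (isArcBetween_image_Icc hc hi hab)
  · rw [uIcc_self, image_singleton, arcOf_self]
  · rw [uIcc_of_ge hab.le]
    exact arcOf_eq hW (hi.ne hab.ne') (isArcBetween_image_Icc hc hi hab).symm

theorem exists_arcOf_inter_subset_singleton {C : Set W} (hC : IsClosed C) (hne : C.Nonempty)
    (x : W) : ∃ r ∈ C, arcOf hW x r ∩ C ⊆ {r} := by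
  by_cases hx : x ∈ C
  · exact ⟨x, hx, by rw [arcOf_self]; exact inter_subset_left⟩
  obtain ⟨p, hp⟩ := hne
  obtain ⟨f, hfc, hfi, rfl, rfl, -⟩ := arcOf_isArcBetween hW (ne_of_mem_of_not_mem hp hx).symm
  obtain ⟨t, htC, ht⟩ := (hC.preimage hfc).isCompact.exists_isLeast ⟨1, hp⟩
  refine ⟨f t, htC, ?_⟩
  rw [arcOf_image_uIcc hW hfc hfi, uIcc_of_le unitInterval.nonneg']
  rintro _ ⟨⟨s, hs, rfl⟩, hsC⟩
  rw [le_antisymm hs.2 (ht hsC)]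
  rfl

end Arcs

theorem unitInterval.dist_le_of_mem_uIcc {s t u v : unitInterval} (hu : u ∈ uIcc s t)
    (hv : v ∈ uIcc s t) : dist u v ≤ dist s t := by
  simp only [mem_uIcc, ← Subtype.coe_le_coe] at hu hv
  exact Real.dist_le_of_mem_uIcc (mem_uIcc.2 hu) (mem_uIcc.2 hv)

theorem tsum_inv_two_pow_succ_mul_le {a : ℕ → ℝ} (N : ℕ) (h0 : ∀ i, 0 ≤ a i)
    (h1 : ∀ i, a i ≤ 1) (hN : ∀ i ≤ N, a i = 0) :
    ∑' i, (2 : ℝ)⁻¹ ^ (i + 1) * a i ≤ 2⁻¹ ^ (N + 1) := by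
  have hle : ∀ i, (2 : ℝ)⁻¹ ^ (i + 1) * a i ≤ 2⁻¹ ^ (i + 1) :=
    fun i => mul_le_of_le_one_right (by positivity) (h1 i)
  have hgeom : Summable fun i => (2 : ℝ)⁻¹ ^ (i + 1) :=
    (summable_nat_add_iff 1).2 (summable_geometric_of_lt_one (by norm_num) (by norm_num))
  have hsum : Summable fun i => (2 : ℝ)⁻¹ ^ (i + 1) * a i :=
    hgeom.of_nonneg_of_le (fun i => mul_nonneg (by positivity) (h0 i)) hle
  have hhead : ∑ i ∈ Finset.range (N + 1), (2 : ℝ)⁻¹ ^ (i + 1) * a i = 0 :=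
    Finset.sum_eq_zero fun i hi => by
      rw [hN i (Nat.lt_succ_iff.1 (Finset.mem_range.1 hi)), mul_zero]
  rw [← hsum.sum_add_tsum_nat_add (N + 1), hhead, zero_add]
  calc ∑' i, (2 : ℝ)⁻¹ ^ (i + (N + 1) + 1) * a (i + (N + 1))
      ≤ ∑' i, (2 : ℝ)⁻¹ ^ (i + (N + 1) + 1) :=
        Summable.tsum_le_tsum (fun i => hle (i + (N + 1)))
          ((summable_nat_add_iff (f := fun i => (2 : ℝ)⁻¹ ^ (i + 1) * a i) (N + 1)).2 hsum)
          ((summable_nat_add_iff (f := fun i => (2 : ℝ)⁻¹ ^ (i + 1)) (N + 1)).2 hgeom)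
    _ = 2⁻¹ ^ (N + 1) := by
        simp only [pow_add, tsum_mul_right, tsum_geometric_inv_two]
        ring

namespace StandingConstruction

variable {X : Type*} [MetricSpace X] (sc : StandingConstruction X)

theorem isClosed_Tn (N : ℕ) : IsClosed (sc.Tn N) := by
  refine ((finite_Iic N).isCompact_biUnion fun i _ => ?_).isClosed
  obtain ⟨-, -, f, hfc, -, -, -, hfr⟩ := sc.arc_I i
  exact hfr ▸ isCompact_range hfc

theorem diam_image_inter_I_le_one (A : Set X) (i : ℕ) : diam (sc.h i '' (A ∩ sc.I i)) ≤ 1 :=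
  calc diam (sc.h i '' (A ∩ sc.I i)) ≤ diam (Icc (0 : ℝ) 1) :=
        diam_mono (sc.h_image i ▸ image_mono inter_subset_right) (isBounded_Icc 0 1)
    _ = 1 := by simp [Real.diam_Icc]

theorem d_le_of_arcOf_inter_Tn_subset {x y : X} {N : ℕ}
    (h : arcOf sc.huac x y ∩ sc.Tn N ⊆ {y}) : sc.d x y ≤ 2⁻¹ ^ (N + 1) :=
  tsum_inv_two_pow_succ_mul_le N (fun _ => diam_nonneg) (sc.diam_image_inter_I_le_one _)
    fun _ hi => diam_subsingleton
      ((subsingleton_singleton.anti fun _ hz => h ⟨hz.1, mem_biUnion hi hz.2⟩).image _)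

theorem d_eq_of_arcOf_subset_I {x y : X} {i : ℕ} (h : arcOf sc.huac x y ⊆ sc.I i) :
    sc.d x y = 2⁻¹ ^ (i + 1) * diam (sc.h i '' arcOf sc.huac x y) := by
  rw [d, tsum_eq_single i, inter_eq_left.2 h]
  intro j hj
  rw [diam_subsingleton (((sc.inter_I i j hj.symm).anti
    (inter_subset_inter_left _ h)).image _), mul_zero]

theorem exists_d_le_of_dist_lt {i : ℕ} {g : unitInterval → X} (hgc : Continuous g)
    (hgi : Function.Injective g) (hgr : range g = sc.I i) {ε : ℝ} (hε : 0 < ε) :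
    ∃ δ > 0, ∀ s t, dist s t < δ → sc.d (g s) (g t) ≤ ε := by
  have hF : UniformContinuous (sc.h i ∘ g) := CompactSpace.uniformContinuous_of_continuous
    ((sc.h_cont i).comp_continuous hgc fun t => hgr ▸ mem_range_self t)
  obtain ⟨δ, hδ, hF⟩ := Metric.uniformContinuous_iff.1 hF ε hε
  refine ⟨δ, hδ, fun s t hst => ?_⟩
  have harc := arcOf_image_uIcc sc.huac hgc hgi s t
  rw [sc.d_eq_of_arcOf_subset_I (harc ▸ hgr ▸ image_subset_range _ _), harc, ← image_comp]
  refine (mul_le_of_le_one_left diam_nonneg (pow_le_one₀ (by norm_num) (by norm_num))).trans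
    (diam_le_of_forall_dist_le hε.le ?_)
  rintro _ ⟨u, hu, rfl⟩ _ ⟨v, hv, rfl⟩
  exact (hF ((unitInterval.dist_le_of_mem_uIcc hu hv).trans_lt hst)).le

theorem exists_mem_Tn_d_le (N : ℕ) (x : X) :
    ∃ r ∈ sc.Tn N, sc.d x r ≤ 2⁻¹ ^ (N + 1) := by
  obtain ⟨-, -, f, -, -, -, -, hfr⟩ := sc.arc_I 0
  obtain ⟨r, hrN, hxr⟩ := exists_arcOf_inter_subset_singleton sc.huac (sc.isClosed_Tn N)
    ⟨f 0, mem_biUnion N.zero_le (hfr ▸ mem_range_self 0)⟩ x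
  exact ⟨r, hrN, sc.d_le_of_arcOf_inter_Tn_subset hxr⟩

theorem isCompact_range_arc_param {Y : Type*} [PseudoMetricSpace Y] {ι : sc.T → Y}
    (hiso : ∀ a b : sc.T, dist (ι a) (ι b) = sc.d a b) {i : ℕ} {g : unitInterval → X}
    (hgc : Continuous g) (hgi : Function.Injective g) (hgr : range g = sc.I i)
    (hgT : ∀ t, g t ∈ sc.T) : IsCompact (range fun t => ι ⟨g t, hgT t⟩) := by
  refine isCompact_range (Metric.uniformContinuous_iff.2 fun ε hε => ?_).continuous
  obtain ⟨δ, hδ, hd⟩ := sc.exists_d_le_of_dist_lt hgc hgi hgr (half_pos hε)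
  refine ⟨δ, hδ, fun {s t} hst => ?_⟩
  rw [hiso]
  exact (hd s t hst).trans_lt (half_lt_self hε)

end StandingConstruction

theorem totallyBounded_of_forall_subset_thickening {α : Type*} [PseudoMetricSpace α]
    {s : Set α} (h : ∀ ε > 0, ∃ t, TotallyBounded t ∧ s ⊆ thickening ε t) :
    TotallyBounded s := by
  refine Metric.totallyBounded_iff.2 fun ε hε => ?_
  obtain ⟨t, ht, hst⟩ := h (ε / 2) (half_pos hε)
  obtain ⟨F, hF, htF⟩ := Metric.totallyBounded_iff.1 ht (ε / 2) (half_pos hε)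
  refine ⟨F, hF, fun x hx => ?_⟩
  obtain ⟨z, hz, hxz⟩ := mem_thickening_iff.1 (hst hx)
  obtain ⟨y, hy, hzy⟩ := mem_iUnion₂.1 (htF hz)
  exact mem_iUnion₂.2 ⟨y, hy, mem_ball.2 (by linarith [dist_triangle x z y, mem_ball.1 hzy])⟩

theorem DenseRange.compactSpace_of_totallyBounded {α β : Type*} [UniformSpace β]
    [CompleteSpace β] {f : α → β} (hf : DenseRange f) (h : TotallyBounded (range f)) :
    CompactSpace β := by
  rw [← totallyBounded_closure, hf.closure_range] at h
  exact isCompact_univ_iff.1 (h.isCompact_of_isClosed isClosed_univ)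

theorem sc_completion_compact_general
    {X Y : Type*} [MetricSpace X]
    [MetricSpace Y] [CompleteSpace Y]
    (sc : StandingConstruction X) (ι : sc.T → Y)
    (hiso : ∀ a b : sc.T, dist (ι a) (ι b) = sc.d a b)
    (hdense : DenseRange ι) :
    CompactSpace Y := by
  choose _ _ g hgc hgi _ _ hgr using sc.arc_I
  have hgT : ∀ i t, g i t ∈ sc.T := fun i t => mem_iUnion.2 ⟨i, hgr i ▸ mem_range_self t⟩
  refine hdense.compactSpace_of_totallyBounded
    (totallyBounded_of_forall_subset_thickening fun ε hε => ?_)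
  obtain ⟨N, hN⟩ := exists_pow_lt_of_lt_one hε (by norm_num : (2 : ℝ)⁻¹ < 1)
  refine ⟨⋃ i ≤ N, range fun t => ι ⟨g i t, hgT i t⟩,
    (totallyBounded_biUnion (finite_Iic N)).2 fun i _ =>
      (sc.isCompact_range_arc_param hiso (hgc i) (hgi i) (hgr i) (hgT i)).totallyBounded, ?_⟩
  rintro _ ⟨x, rfl⟩
  obtain ⟨r, hrN, hxr⟩ := sc.exists_mem_Tn_d_le N x
  obtain ⟨i, hi, hri⟩ := mem_iUnion₂.1 hrN
  obtain ⟨t, rfl⟩ := hgr i ▸ hri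
  refine mem_thickening_iff.2 ⟨_, mem_biUnion hi (mem_range_self t), ?_⟩
  rw [hiso]
  exact hxr.trans_lt <|
    (pow_lt_pow_right_of_lt_one₀ (by norm_num) (by norm_num) N.lt_succ_self).trans hN

/-- **Claim A of Proposition 3.1.** The metric completion `(T̄, d)` of `(T, d)` from the
standing construction is compact. Here the completion is formalized as a complete metric
space `Y` together with a map `ι : T → Y` which is isometric for `d` and has dense range. -/
theorem sc_completion_compact
    {X Y : Type*} [MetricSpace X] [CompactSpace X] [ConnectedSpace X] [Nonempty X]
    [MetricSpace Y] [CompleteSpace Y]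
    (sc : StandingConstruction X) (ι : sc.T → Y)
    (hiso : ∀ a b : sc.T, dist (ι a) (ι b) = sc.d a b)
    (hdense : DenseRange ι) :
    CompactSpace Y :=
  sc_completion_compact_general sc ι hiso hdense
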